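/- Given words u and v over interval letters, there is a decomposition u = u₁·u₂, unique up to commutation equivalence, such that u₂ is left-absorbed by v and u₁ is not bitten from the right by v; moreover this decomposition depends only on the left stabiliser set sL(v). -/

import Mathlib

structure Letter (N : ℕ) where
  lo : ℕ
  hi : ℕ
  lo_le_hi : lo ≤ hi
  hi_le : hi ≤ N

namespace PS

/-- `t` is a (non-strict) subletter of `s`. -/
def Sub {N : ℕ} (t s : Letter N) : Prop := s.lo ≤ t.lo ∧ t.hi ≤ s.hi

/-- `t` is a proper subletter of `s`. -/
def PSub {N : ℕ} (t s : Letter N) : Prop := Sub t s ∧ t ≠ s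

/-- Two letters commute iff they have distance at least 2. -/
def Comm {N : ℕ} (s t : Letter N) : Prop := s.hi + 2 ≤ t.lo ∨ t.hi + 2 ≤ s.lo

abbrev Word (N : ℕ) := List (Letter N)

/-- Commutation step: swap two adjacent commuting letters. -/
def SwapStep {N : ℕ} (u v : Word N) : Prop :=
  ∃ (x y : Word N) (s t : Letter N),
    Comm s t ∧ u = x ++ s :: t :: y ∧ v = x ++ t :: s :: y

/-- Cancellation step: replace an occurrence `s·t` or `t·s` by `s`, when `t ⊆ s`. -/
def CancelStep {N : ℕ} (u v : Word N) : Prop :=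
  ∃ (x y : Word N) (s t : Letter N),
    Sub t s ∧ (u = x ++ s :: t :: y ∨ u = x ++ t :: s :: y) ∧ v = x ++ s :: y

/-- Splitting step: replace an occurrence `s·s` by a (possibly empty) product of
proper subletters of `s`. -/
def SplitStep {N : ℕ} (u v : Word N) : Prop :=
  ∃ (x y : Word N) (s : Letter N) (l : Word N),
    (∀ t ∈ l, PSub t s) ∧ u = x ++ s :: s :: y ∧ v = x ++ l ++ y

/-- Commutation-equivalence of words. -/
def WEquiv {N : ℕ} : Word N → Word N → Prop := Relation.ReflTransGen SwapStep

/-- Reduction: finitely many commutation and cancellation steps. -/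
def Red {N : ℕ} : Word N → Word N → Prop :=
  Relation.ReflTransGen (fun u v => SwapStep u v ∨ CancelStep u v)

/-- Strong reduction: also allowing splitting steps. -/
def SRed {N : ℕ} : Word N → Word N → Prop :=
  Relation.ReflTransGen (fun u v => SwapStep u v ∨ CancelStep u v ∨ SplitStep u v)

/-- The congruence defining the monoid Γ. -/
def GammaRel {N : ℕ} : Word N → Word N → Prop :=
  Relation.EqvGen (fun u v => SwapStep u v ∨ CancelStep u v)

/-- A word is reduced if there is no pair of occurrences `i ≠ j` with `sᵢ ⊆ sⱼ`
such that `sᵢ` commutes with every letter strictly between them. -/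
def Reduced {N : ℕ} (w : Word N) : Prop :=
  ¬ ∃ (x y z : Word N) (a b : Letter N),
      w = x ++ a :: (y ++ b :: z) ∧
      ((Sub a b ∧ ∀ r ∈ y, Comm a r) ∨ (Sub b a ∧ ∀ r ∈ y, Comm b r))

/-- The letter `s` is left-absorbed by the word `v`. -/
def LAbsLetter {N : ℕ} (s : Letter N) (v : Word N) : Prop :=
  ∃ (x : Word N) (t : Letter N) (y : Word N),
    v = x ++ t :: y ∧ Sub s t ∧ ∀ r ∈ x, Comm s r

/-- The letter `s` is properly left-absorbed by the word `v`. -/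
def PLAbsLetter {N : ℕ} (s : Letter N) (v : Word N) : Prop :=
  ∃ (x : Word N) (t : Letter N) (y : Word N),
    v = x ++ t :: y ∧ PSub s t ∧ ∀ r ∈ x, Comm s r

/-- The letter `s` is right-absorbed by the word `w`. -/
def RAbsLetter {N : ℕ} (s : Letter N) (w : Word N) : Prop :=
  ∃ (x : Word N) (t : Letter N) (y : Word N),
    w = x ++ t :: y ∧ Sub s t ∧ ∀ r ∈ y, Comm s r

/-- The letter `s` is properly right-absorbed by the word `w`. -/
def PRAbsLetter {N : ℕ} (s : Letter N) (w : Word N) : Prop :=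
  ∃ (x : Word N) (t : Letter N) (y : Word N),
    w = x ++ t :: y ∧ PSub s t ∧ ∀ r ∈ y, Comm s r

/-- The word `u` is left-absorbed by `v`. -/
def LAbsWord {N : ℕ} (u v : Word N) : Prop := ∀ s ∈ u, LAbsLetter s v

/-- `v` bites `u` from the right: `v` left-absorbs some letter of the final segment of `u`. -/
def BitesRight {N : ℕ} (v u : Word N) : Prop :=
  ∃ (x : Word N) (s : Letter N) (y : Word N),
    u = x ++ s :: y ∧ (∀ r ∈ y, Comm s r) ∧ LAbsLetter s v

end PS

namespace PS

/-- The index `i` belongs to the letter `t`. -/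
def MemL {N : ℕ} (i : ℕ) (t : Letter N) : Prop := t.lo ≤ i ∧ i ≤ t.hi

/-- The index `i` commutes with the letter `t` (distance at least 2). -/
def IdxComm {N : ℕ} (i : ℕ) (t : Letter N) : Prop := i + 2 ≤ t.lo ∨ t.hi + 2 ≤ i

/-- Left stabiliser of a word: union over `j` of `t_j ∩ Cent(t₁⋯t_{j-1})`. -/
def sL {N : ℕ} (v : Word N) : Set ℕ :=
  {i | ∃ (x : Word N) (t : Letter N) (y : Word N),
        v = x ++ t :: y ∧ MemL i t ∧ ∀ r ∈ x, IdxComm i r}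

end PS

/-!
Read `u` from the right and send a letter to `u₂` when `v` left-absorbs it and it commutes
with every letter already sent to `u₁`. This greedy split is invariant under commutation
moves of `u`, and every admissible split `u₁ ++ u₂` is a fixed point of it, which gives
existence and uniqueness at once. Left absorption of a letter `s` by `v` only depends on
`sL v`, because it amounts to `s ⊆ sL v`: the letters of `v` witnessing neighbouring
indices of `s` are forced to be the same occurrence.
-/

theorem List.eq_and_eq_or_mem_of_append_cons_eq {α : Type*} {x y x' y' : List α} {a b : α}
    (h : x ++ a :: y = x' ++ b :: y') : (x = x' ∧ a = b) ∨ a ∈ x' ∨ b ∈ x := by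
  rcases List.append_eq_append_iff.1 h with ⟨_ | ⟨c, z⟩, rfl, hz⟩ | ⟨_ | ⟨c, z⟩, rfl, hz⟩
  · exact .inl ⟨(List.append_nil x).symm, (List.cons.inj hz).1⟩
  · exact .inr (.inl (by simp [(List.cons.inj hz).1]))
  · exact .inl ⟨List.append_nil x', (List.cons.inj hz).1.symm⟩
  · exact .inr (.inr (by simp [(List.cons.inj hz).1]))

namespace PS

variable {N : ℕ}

theorem Comm.symm {s t : Letter N} (h : Comm s t) : Comm t s := Or.symm h

theorem SwapStep.perm {u v : Word N} (h : SwapStep u v) : u.Perm v := by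
  obtain ⟨x, y, s, t, -, rfl, rfl⟩ := h
  exact (List.Perm.swap t s y).append_left x

namespace WEquiv

theorem refl (w : Word N) : WEquiv w w := Relation.ReflTransGen.refl

theorem trans {a b c : Word N} (hab : WEquiv a b) (hbc : WEquiv b c) : WEquiv a c :=
  Relation.ReflTransGen.trans hab hbc

theorem perm {a b : Word N} (h : WEquiv a b) : a.Perm b := by
  induction h with
  | refl => rfl
  | tail _ hs ih => exact ih.trans hs.perm

theorem cons {a b : Word N} (c : Letter N) (h : WEquiv a b) : WEquiv (c :: a) (c :: b) :=
  Relation.ReflTransGen.lift (c :: ·)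
    (fun _ _ ⟨x, y, s, t, hst, hu, hv⟩ => ⟨c :: x, y, s, t, hst, by simp [hu], by simp [hv]⟩) _ _ h

theorem swap {s t : Letter N} (w : Word N) (h : Comm s t) :
    WEquiv (s :: t :: w) (t :: s :: w) :=
  Relation.ReflTransGen.single ⟨[], w, s, t, h, rfl, rfl⟩

theorem cons_append_of_forall_comm {s : Letter N} {a : Word N} (b : Word N)
    (h : ∀ r ∈ a, Comm s r) : WEquiv (s :: (a ++ b)) (a ++ s :: b) := by
  induction a with
  | nil => exact refl _
  | cons c a ih =>
    rw [List.forall_mem_cons] at h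
    exact (swap _ h.1).trans ((ih h.2).cons c)

end WEquiv

def ProdWEquiv (p q : Word N × Word N) : Prop := WEquiv p.1 q.1 ∧ WEquiv p.2 q.2

theorem ProdWEquiv.refl (p : Word N × Word N) : ProdWEquiv p p := ⟨.refl _, .refl _⟩

theorem ProdWEquiv.trans {p q r : Word N × Word N} (hpq : ProdWEquiv p q)
    (hqr : ProdWEquiv q r) : ProdWEquiv p r :=
  ⟨hpq.1.trans hqr.1, hpq.2.trans hqr.2⟩

section AbsorbSplit

variable (P : Letter N → Prop)

/-- `BitesRight v` is `ExistsFinal (LAbsLetter · v)`. -/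
def ExistsFinal (u : Word N) : Prop :=
  ∃ (x : Word N) (s : Letter N) (y : Word N), u = x ++ s :: y ∧ (∀ r ∈ y, Comm s r) ∧ P s

theorem existsFinal_cons {s : Letter N} {a : Word N} :
    ExistsFinal P (s :: a) ↔ (P s ∧ ∀ r ∈ a, Comm s r) ∨ ExistsFinal P a := by
  constructor
  · rintro ⟨_ | ⟨c, x⟩, t, y, h, hy, ht⟩
    · obtain ⟨rfl, rfl⟩ := List.cons.inj h
      exact .inl ⟨ht, hy⟩
    · exact .inr ⟨x, t, y, (List.cons.inj h).2, hy, ht⟩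
  · rintro (⟨hs, ha⟩ | ⟨x, t, y, rfl, hy, ht⟩)
    · exact ⟨[], s, a, rfl, ha, hs⟩
    · exact ⟨s :: x, t, y, rfl, hy, ht⟩

open Classical in
noncomputable def absorbStep (s : Letter N) (p : Word N × Word N) : Word N × Word N :=
  if P s ∧ ∀ r ∈ p.1, Comm s r then (p.1, s :: p.2) else (s :: p.1, p.2)

noncomputable def absorbSplit (w : Word N) : Word N × Word N :=
  w.foldr (absorbStep P) ([], [])

variable {P}

theorem absorbStep_of_absorbs {s : Letter N} {p : Word N × Word N}
    (h : P s ∧ ∀ r ∈ p.1, Comm s r) : absorbStep P s p = (p.1, s :: p.2) :=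
  if_pos h

theorem absorbStep_of_not_absorbs {s : Letter N} {p : Word N × Word N}
    (h : ¬(P s ∧ ∀ r ∈ p.1, Comm s r)) : absorbStep P s p = (s :: p.1, p.2) :=
  if_neg h

theorem wequiv_absorbStep {s : Letter N} {w : Word N} {p : Word N × Word N}
    (h : WEquiv w (p.1 ++ p.2)) :
    WEquiv (s :: w) ((absorbStep P s p).1 ++ (absorbStep P s p).2) := by
  by_cases hs : P s ∧ ∀ r ∈ p.1, Comm s r
  · rw [absorbStep_of_absorbs hs]
    exact (h.cons s).trans (.cons_append_of_forall_comm _ hs.2)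
  · rw [absorbStep_of_not_absorbs hs]
    exact h.cons s

theorem forall_snd_absorbStep {s : Letter N} {p : Word N × Word N} (h : ∀ r ∈ p.2, P r) :
    ∀ r ∈ (absorbStep P s p).2, P r := by
  by_cases hs : P s ∧ ∀ r ∈ p.1, Comm s r
  · rw [absorbStep_of_absorbs hs, List.forall_mem_cons]
    exact ⟨hs.1, h⟩
  · rwa [absorbStep_of_not_absorbs hs]

theorem not_existsFinal_fst_absorbStep {s : Letter N} {p : Word N × Word N}
    (h : ¬ExistsFinal P p.1) : ¬ExistsFinal P (absorbStep P s p).1 := by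
  by_cases hs : P s ∧ ∀ r ∈ p.1, Comm s r
  · rwa [absorbStep_of_absorbs hs]
  · rw [absorbStep_of_not_absorbs hs, existsFinal_cons]
    tauto

theorem ProdWEquiv.absorbStep {s : Letter N} {p q : Word N × Word N} (h : ProdWEquiv p q) :
    ProdWEquiv (absorbStep P s p) (absorbStep P s q) := by
  have hiff : (P s ∧ ∀ r ∈ p.1, Comm s r) ↔ (P s ∧ ∀ r ∈ q.1, Comm s r) := by
    simp only [h.1.perm.mem_iff]
  by_cases hs : P s ∧ ∀ r ∈ p.1, Comm s r
  · rw [absorbStep_of_absorbs hs, absorbStep_of_absorbs (hiff.1 hs)]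
    exact ⟨h.1, h.2.cons s⟩
  · rw [absorbStep_of_not_absorbs hs, absorbStep_of_not_absorbs (hiff.not.1 hs)]
    exact ⟨h.1.cons s, h.2⟩

theorem absorbs_fst_absorbStep_iff {s t : Letter N} (hst : Comm s t) (p : Word N × Word N) :
    (P s ∧ ∀ r ∈ (absorbStep P t p).1, Comm s r) ↔ (P s ∧ ∀ r ∈ p.1, Comm s r) := by
  by_cases ht : P t ∧ ∀ r ∈ p.1, Comm t r
  · rw [absorbStep_of_absorbs ht]
  · rw [absorbStep_of_not_absorbs ht, List.forall_mem_cons]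
    exact and_congr_right fun _ => and_iff_right hst

theorem prodWEquiv_absorbStep_comm {s t : Letter N} (hst : Comm s t) (p : Word N × Word N) :
    ProdWEquiv (absorbStep P s (absorbStep P t p)) (absorbStep P t (absorbStep P s p)) := by
  have hs' := absorbs_fst_absorbStep_iff (P := P) hst p
  have ht' := absorbs_fst_absorbStep_iff (P := P) hst.symm p
  by_cases hs : P s ∧ ∀ r ∈ p.1, Comm s r <;> by_cases ht : P t ∧ ∀ r ∈ p.1, Comm t r
  · rw [absorbStep_of_absorbs (hs'.2 hs), absorbStep_of_absorbs (ht'.2 ht),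
      absorbStep_of_absorbs hs, absorbStep_of_absorbs ht]
    exact ⟨.refl _, .swap _ hst⟩
  · rw [absorbStep_of_absorbs (hs'.2 hs), absorbStep_of_not_absorbs (ht'.not.2 ht),
      absorbStep_of_absorbs hs, absorbStep_of_not_absorbs ht]
    exact .refl _
  · rw [absorbStep_of_not_absorbs (hs'.not.2 hs), absorbStep_of_absorbs (ht'.2 ht),
      absorbStep_of_not_absorbs hs, absorbStep_of_absorbs ht]
    exact .refl _
  · rw [absorbStep_of_not_absorbs (hs'.not.2 hs), absorbStep_of_not_absorbs (ht'.not.2 ht),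
      absorbStep_of_not_absorbs hs, absorbStep_of_not_absorbs ht]
    exact ⟨.swap _ hst, .refl _⟩

theorem absorbSplit_cons (s : Letter N) (w : Word N) :
    absorbSplit P (s :: w) = absorbStep P s (absorbSplit P w) := rfl

theorem wequiv_absorbSplit (w : Word N) :
    WEquiv w ((absorbSplit P w).1 ++ (absorbSplit P w).2) := by
  induction w with
  | nil => exact .refl _
  | cons s w ih => exact wequiv_absorbStep ih

theorem forall_snd_absorbSplit (w : Word N) : ∀ r ∈ (absorbSplit P w).2, P r := by
  induction w with
  | nil => simp [absorbSplit]
  | cons s w ih => exact forall_snd_absorbStep ih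

theorem not_existsFinal_fst_absorbSplit (w : Word N) : ¬ExistsFinal P (absorbSplit P w).1 := by
  induction w with
  | nil => rintro ⟨x, s, y, h, -⟩; simp [absorbSplit] at h
  | cons s w ih => exact not_existsFinal_fst_absorbStep ih

theorem absorbSplit_of_forall {w : Word N} (h : ∀ s ∈ w, P s) : absorbSplit P w = ([], w) := by
  induction w with
  | nil => rfl
  | cons s w ih =>
    rw [List.forall_mem_cons] at h
    rw [absorbSplit_cons, ih h.2, absorbStep_of_absorbs ⟨h.1, by simp⟩]

theorem absorbSplit_append {u₁ u₂ : Word N} (h₁ : ¬ExistsFinal P u₁) (h₂ : ∀ s ∈ u₂, P s) :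
    absorbSplit P (u₁ ++ u₂) = (u₁, u₂) := by
  induction u₁ with
  | nil => exact absorbSplit_of_forall h₂
  | cons s u₁ ih =>
    rw [existsFinal_cons, not_or] at h₁
    rw [List.cons_append, absorbSplit_cons, ih h₁.2, absorbStep_of_not_absorbs h₁.1]

theorem ProdWEquiv.absorbSplit_of_swapStep {w w' : Word N} (h : SwapStep w w') :
    ProdWEquiv (absorbSplit P w) (absorbSplit P w') := by
  obtain ⟨x, y, s, t, hst, rfl, rfl⟩ := h
  induction x with
  | nil => exact prodWEquiv_absorbStep_comm hst _
  | cons c x ih => exact ih.absorbStep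

theorem ProdWEquiv.absorbSplit {w w' : Word N} (h : WEquiv w w') :
    ProdWEquiv (absorbSplit P w) (absorbSplit P w') := by
  induction h with
  | refl => exact .refl _
  | tail _ hs ih => exact ih.trans (.absorbSplit_of_swapStep hs)

end AbsorbSplit

theorem idxComm_of_comm {i : ℕ} {s r : Letter N} (hi : MemL i s) (h : Comm s r) :
    IdxComm i r := by
  simp only [MemL, Comm, IdxComm] at hi h ⊢
  omega

theorem comm_of_forall_idxComm {s r : Letter N} (h : ∀ i, MemL i s → IdxComm i r) :
    Comm s r := by
  by_contra hsr
  have hs := s.lo_le_hi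
  have hr := r.lo_le_hi
  have hi := h (max s.lo (r.lo - 1))
  simp only [Comm, MemL, IdxComm] at hsr hi
  omega

/-- Neither witness can lie strictly before the other, since it contains a point within
distance one of the other index. -/
theorem sL_witness_unique {x y x' y' : Word N} {t t' : Letter N} {i j : ℕ}
    (h : x ++ t :: y = x' ++ t' :: y') (hi : MemL i t) (hx : ∀ r ∈ x, IdxComm i r)
    (hj : MemL j t') (hx' : ∀ r ∈ x', IdxComm j r) (hij : j ≤ i + 1) (hji : i ≤ j + 1) :
    x = x' ∧ t = t' := by
  simp only [MemL] at hi hj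
  rcases List.eq_and_eq_or_mem_of_append_cons_eq h with h | ht | ht
  · exact h
  · have := hx' t ht
    simp only [IdxComm] at this
    omega
  · have := hx t' ht
    simp only [IdxComm] at this
    omega

theorem labsLetter_iff_forall_mem_sL {s : Letter N} {v : Word N} :
    LAbsLetter s v ↔ ∀ i, MemL i s → i ∈ sL v := by
  constructor
  · rintro ⟨x, t, y, rfl, hst, hx⟩ i hi
    refine ⟨x, t, y, rfl, ?_, fun r hr => idxComm_of_comm hi (hx r hr)⟩
    simp only [MemL, Sub] at hi hst ⊢
    omega
  · intro hv
    obtain ⟨x, t, y, rfl, hlo, hxlo⟩ := hv s.lo ⟨le_rfl, s.lo_le_hi⟩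
    have hwit : ∀ i, s.lo ≤ i → i ≤ s.hi → MemL i t ∧ ∀ r ∈ x, IdxComm i r := by
      intro i hi
      induction i, hi using Nat.le_induction with
      | base => exact fun _ => ⟨hlo, hxlo⟩
      | succ i hi ih =>
        intro hle
        obtain ⟨hit, hix⟩ := ih (by omega)
        obtain ⟨x', t', y', h, hj, hjx⟩ := hv (i + 1) ⟨by omega, hle⟩
        obtain ⟨rfl, rfl⟩ := sL_witness_unique h hit hix hj hjx le_rfl (by omega)
        exact ⟨hj, hjx⟩
    refine ⟨x, t, y, rfl, ?_, fun r hr =>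
      comm_of_forall_idxComm fun i hi => (hwit i hi.1 hi.2).2 r hr⟩
    have := (hwit s.hi s.lo_le_hi le_rfl).1
    simp only [MemL] at hlo this
    exact ⟨hlo.1, this.2⟩

theorem labsLetter_congr_of_sL_eq {s : Letter N} {v v' : Word N} (h : sL v' = sL v) :
    LAbsLetter s v' ↔ LAbsLetter s v := by
  rw [labsLetter_iff_forall_mem_sL, labsLetter_iff_forall_mem_sL, h]

end PS

open PS in
/-- There is a decomposition `u = u₁ · u₂`, unique up to commutation, with `u₂`
left-absorbed by `v` and `u₁` not bitten from the right by `v`; the decomposition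
depends only on `sL v`. -/
theorem exists_absorption_decomposition {N : ℕ} (u v : Word N) :
    ∃ u₁ u₂ : Word N, WEquiv u (u₁ ++ u₂) ∧ LAbsWord u₂ v ∧ ¬ BitesRight v u₁ ∧
      (∀ u₁' u₂' : Word N, WEquiv u (u₁' ++ u₂') → LAbsWord u₂' v →
        ¬ BitesRight v u₁' → WEquiv u₁ u₁' ∧ WEquiv u₂ u₂') ∧
      (∀ v' : Word N, sL v' = sL v → LAbsWord u₂ v' ∧ ¬ BitesRight v' u₁) := by
  set P : Letter N → Prop := (LAbsLetter · v)
  have hbites (v' : Word N) (hv' : sL v' = sL v) (w : Word N) :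
      BitesRight v' w ↔ ExistsFinal P w :=
    exists₃_congr fun _ _ _ => and_congr_right' (and_congr_right' (labsLetter_congr_of_sL_eq hv'))
  refine ⟨(absorbSplit P u).1, (absorbSplit P u).2, wequiv_absorbSplit u,
    forall_snd_absorbSplit u, (hbites v rfl _).not.2 (not_existsFinal_fst_absorbSplit u),
    fun u₁' u₂' hu h₂ h₁ => ?_, fun v' hv' => ⟨fun s hs => ?_, ?_⟩⟩
  · have := ProdWEquiv.absorbSplit (P := P) hu
    rwa [absorbSplit_append ((hbites v rfl _).not.1 h₁) h₂] at this
  · exact (labsLetter_congr_of_sL_eq hv').2 (forall_snd_absorbSplit u s hs)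
  · exact (hbites v' hv' _).not.2 (not_existsFinal_fst_absorbSplit u)
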